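/- Fix α, β ∈ (0,1), positive reals a, b, μ, and θ ∈ (π/2, π/(1+α)). For every nonzero complex z with |arg z| < θ and every real λ ≥ 0, one has |g(z)| / (|z| · |g(z) + λ|) ≤ (1/sin(π − (1+α)θ)) · |z|^{−1}, where g(z) = (z + a·z^{1+α}) / (μ·(1 + b·z^β)). -/

import Mathlib

/-!
On the sector, `g(z) = μ⁻¹ z (1 + a z^α) / (1 + b z^β)`, where `a z^α` and `b z^β` point in
directions turned from the positive axis to the same side as `z`, by at most `α |arg z|` and
`|arg z|`; adding `1` only turns them back towards the axis. Hence
`|arg g(z)| ≤ (1 + α) |arg z| < (1 + α) θ =: ψ < π`. For `w` with `|arg w| ≤ ψ` and `λ ≥ 0`,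
completing the square in `|w + λ|² = |w|² + 2λ Re w + λ²` with `Re w ≥ cos ψ |w|` gives
`|w + λ| ≥ sin ψ |w|`, which is the bound.
-/

open Complex Real ComplexConjugate

namespace Complex

lemma arg_cpow_ofReal {z : ℂ} (hz : z ≠ 0) {y : ℝ} (hy : y * arg z ∈ Set.Ioc (-π) π) :
    arg (z ^ (y : ℂ)) = y * arg z := by
  rw [cpow_ofReal, ofReal_cos, ofReal_sin, mul_comm (arg z)]
  exact arg_mul_cos_add_sin_mul_I (Real.rpow_pos_of_pos (norm_pos_iff.2 hz) y) hy

lemma abs_arg_conj (z : ℂ) : |arg (conj z)| = |arg z| := by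
  rw [arg_conj]
  split_ifs with h
  · rw [h]
  · exact abs_neg _

lemma arg_one_add_mem_Icc {u : ℂ} (h₀ : 0 ≤ arg u) (hπ : arg u < π) :
    arg (1 + u) ∈ Set.Icc 0 (arg u) := by
  rcases (arg_nonneg_iff.1 h₀).eq_or_lt with him | him
  · have hre : 0 ≤ u.re := by
      by_contra! h
      exact hπ.ne (arg_eq_pi_iff.2 ⟨h, him.symm⟩)
    have hu : arg u = 0 := arg_eq_zero_iff.2 ⟨hre, him.symm⟩
    have h1u : arg (1 + u) = 0 := arg_eq_zero_iff.2
      ⟨by rw [add_re, one_re]; linarith, by rw [add_im, one_im, ← him, add_zero]⟩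
    simp [hu, h1u]
  · have hu : u ≠ 0 := by rintro rfl; simp at him
    have hw : arg (1 + u⁻¹) < 0 := by
      rw [arg_neg_iff, add_im, one_im, zero_add, inv_im, neg_div, neg_lt_zero]
      exact div_pos him (normSq_pos.2 hu)
    have hmul : 1 + u = u * (1 + u⁻¹) := by field_simp; ring
    have harg : arg (1 + u) = arg u + arg (1 + u⁻¹) := by
      rw [hmul]
      refine arg_mul hu ?_ ⟨by linarith [neg_pi_lt_arg (1 + u⁻¹)], by linarith [arg_le_pi u]⟩
      rintro h; rw [h] at hw; simp at hw
    exact ⟨arg_nonneg_iff.2 (by simpa using him.le), by linarith⟩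

section
variable {z u v : ℂ} {p q : ℝ}

lemma arg_mul_one_add_div_one_add_mem_Icc (hz : z ≠ 0) (hz₀ : 0 ≤ arg z) (hp : 0 ≤ p)
    (hq₀ : 0 ≤ q) (hq₁ : q ≤ 1) (hu : arg u = p * arg z) (hv : arg v = q * arg z)
    (hlt : (1 + p) * arg z < π) :
    arg (z * (1 + u) / (1 + v)) ∈ Set.Icc 0 ((1 + p) * arg z) := by
  have hqz : q * arg z ≤ arg z := mul_le_of_le_one_left hz₀ hq₁
  obtain ⟨hA₀, hA⟩ := arg_one_add_mem_Icc (u := u) (by rw [hu]; positivity) (by nlinarith)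
  obtain ⟨hB₀, hB⟩ := arg_one_add_mem_Icc (u := v) (by rw [hv]; positivity) (by nlinarith)
  have h1u : 1 + u ≠ 0 := by
    rintro h; rw [eq_neg_of_add_eq_zero_right h, arg_neg_one] at hu; nlinarith
  have h1v : 1 + v ≠ 0 := by
    rintro h; rw [eq_neg_of_add_eq_zero_right h, arg_neg_one] at hv; nlinarith
  have hinv : arg (1 + v)⁻¹ = -arg (1 + v) := by
    rw [arg_inv, if_neg (by nlinarith)]
  have hzu : arg (z * (1 + u)) = arg z + arg (1 + u) :=
    arg_mul hz h1u ⟨by linarith [Real.pi_pos], by nlinarith⟩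
  rw [div_eq_mul_inv, arg_mul (mul_ne_zero hz h1u) (inv_ne_zero h1v), hzu, hinv]
  · constructor <;> nlinarith
  · rw [hzu, hinv]; constructor <;> nlinarith [Real.pi_pos]

lemma abs_arg_mul_one_add_div_one_add_le (hz : z ≠ 0) (hp : 0 ≤ p) (hq₀ : 0 ≤ q) (hq₁ : q ≤ 1)
    (hu : arg u = p * arg z) (hv : arg v = q * arg z) (hlt : (1 + p) * |arg z| < π) :
    |arg (z * (1 + u) / (1 + v))| ≤ (1 + p) * |arg z| := by
  rcases le_or_gt 0 (arg z) with hz₀ | hz₀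
  · rw [abs_of_nonneg hz₀] at hlt ⊢
    obtain ⟨h₀, h⟩ := arg_mul_one_add_div_one_add_mem_Icc hz hz₀ hp hq₀ hq₁ hu hv hlt
    rwa [abs_of_nonneg h₀]
  · have hconj {w : ℂ} (hw : arg w ≤ 0) : arg (conj w) = -arg w := by
      rw [arg_conj, if_neg (by linarith [Real.pi_pos])]
    have hu₀ : arg u ≤ 0 := by rw [hu]; nlinarith
    have hv₀ : arg v ≤ 0 := by rw [hv]; nlinarith
    have hconj_eq : conj (z * (1 + u) / (1 + v)) = conj z * (1 + conj u) / (1 + conj v) := by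
      simp only [map_div₀, map_mul, map_add, map_one]
    rw [abs_of_neg hz₀] at hlt ⊢
    obtain ⟨h₀, h⟩ := arg_mul_one_add_div_one_add_mem_Icc ((map_ne_zero _).2 hz)
      (by rw [hconj hz₀.le]; linarith) hp hq₀ hq₁ (by rw [hconj hu₀, hconj hz₀.le, hu]; ring)
      (by rw [hconj hv₀, hconj hz₀.le, hv]; ring) (by rwa [hconj hz₀.le])
    rw [← hconj_eq] at h₀ h
    rw [hconj hz₀.le] at h
    rwa [← abs_arg_conj, abs_of_nonneg h₀]

end

lemma sin_mul_norm_le_norm_add_ofReal {w : ℂ} {ψ r : ℝ} (hψ : ψ ≤ π) (hw : |arg w| ≤ ψ)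
    (hr : 0 ≤ r) : Real.sin ψ * ‖w‖ ≤ ‖w + r‖ := by
  have hcos : Real.cos ψ * ‖w‖ ≤ w.re := by
    rw [← norm_mul_cos_arg, mul_comm, ← Real.cos_abs (arg w)]
    exact mul_le_mul_of_nonneg_left
      (Real.cos_le_cos_of_nonneg_of_le_pi (abs_nonneg _) hψ hw) (norm_nonneg w)
  have hsin : 0 ≤ Real.sin ψ :=
    Real.sin_nonneg_of_nonneg_of_le_pi ((abs_nonneg _).trans hw) hψ
  have hw2 : ‖w‖ ^ 2 = w.re ^ 2 + w.im ^ 2 := by rw [Complex.sq_norm, normSq_apply]; ring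
  have hwr2 : ‖w + r‖ ^ 2 = (w.re + r) ^ 2 + w.im ^ 2 := by
    rw [Complex.sq_norm, normSq_apply]; simp only [add_re, ofReal_re, add_im, ofReal_im]; ring
  rw [← pow_le_pow_iff_left₀ (by positivity) (norm_nonneg _) two_ne_zero, mul_pow,
    Real.sin_sq, hwr2]
  nlinarith [sq_nonneg (r + Real.cos ψ * ‖w‖), mul_le_mul_of_nonneg_left hcos hr]

end Complex

/-- The symbol `g(z) = (z + a z^{1+α}) / (μ (1 + b z^β))` of the fractional
Oldroyd-B problem. Powers are principal complex powers. -/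
noncomputable def oldroydSymbol (a b μ α β : ℝ) (z : ℂ) : ℂ :=
  (z + (a : ℂ) * z ^ ((1 + α : ℝ) : ℂ)) / ((μ : ℂ) * (1 + (b : ℂ) * z ^ ((β : ℝ) : ℂ)))

lemma oldroydSymbol_eq {a b μ α β : ℝ} {z : ℂ} (hz : z ≠ 0) :
    oldroydSymbol a b μ α β z =
      ((μ⁻¹ : ℝ) : ℂ) * (z * (1 + a * z ^ (α : ℂ)) / (1 + b * z ^ (β : ℂ))) := by
  rw [oldroydSymbol, ofReal_add, ofReal_one, cpow_add _ _ hz, cpow_one, ofReal_inv]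
  simp only [div_eq_mul_inv, mul_inv]
  ring

theorem oldroydSymbol_Ehat_bound (α β a b μ θ : ℝ)
    (hα : α ∈ Set.Ioo (0 : ℝ) 1) (hβ : β ∈ Set.Ioo (0 : ℝ) 1)
    (ha : 0 < a) (hb : 0 < b) (hμ : 0 < μ)
    (hθ' : θ < Real.pi / (1 + α))
    (z : ℂ) (hz : z ≠ 0) (hargz : |Complex.arg z| < θ)
    (lam : ℝ) (hlam : 0 ≤ lam) :
    ‖oldroydSymbol a b μ α β z‖ /
        (‖z‖ * ‖oldroydSymbol a b μ α β z + (lam : ℂ)‖) ≤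
      (1 / Real.sin (Real.pi - (1 + α) * θ)) * ‖z‖⁻¹ := by
  have hψ : (1 + α) * θ < π := (lt_div_iff₀' (by linarith [hα.1])).1 hθ'
  have hφ : (1 + α) * |arg z| ≤ (1 + α) * θ := by gcongr; linarith [hα.1]
  have harg_pow {p : ℝ} (hp : p ∈ Set.Ioo (0 : ℝ) 1) {c : ℝ} (hc : 0 < c) :
      arg (c * z ^ (p : ℂ)) = p * arg z := by
    rw [arg_real_mul _ hc, arg_cpow_ofReal hz]
    constructor <;> nlinarith [hp.1, hp.2, neg_pi_lt_arg z, arg_le_pi z, Real.pi_pos]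
  have hg : |arg (oldroydSymbol a b μ α β z)| ≤ (1 + α) * θ := by
    rw [oldroydSymbol_eq hz, arg_real_mul _ (inv_pos.2 hμ)]
    exact (abs_arg_mul_one_add_div_one_add_le hz hα.1.le hβ.1.le hβ.2.le (harg_pow hα ha)
      (harg_pow hβ hb) (hφ.trans_lt hψ)).trans hφ
  have hsin : 0 < Real.sin ((1 + α) * θ) := Real.sin_pos_of_pos_of_lt_pi
    (mul_pos (by linarith [hα.1]) ((abs_nonneg _).trans_lt hargz)) hψ
  have hkey := sin_mul_norm_le_norm_add_ofReal hψ.le hg hlam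
  set g := oldroydSymbol a b μ α β z
  rw [Real.sin_pi_sub]
  rcases (norm_nonneg (g + lam)).eq_or_lt with h0 | hpos
  · rw [← h0, mul_zero, div_zero]
    positivity
  · rw [div_le_iff₀ (mul_pos (norm_pos_iff.2 hz) hpos)]
    calc ‖g‖ ≤ ‖g + lam‖ / Real.sin ((1 + α) * θ) := (le_div_iff₀' hsin).2 hkey
      _ = _ := by field_simp
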